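/- For any probability distribution p on N ≥ 3 points, S_α(p) ≥ JS_α(p) when 0 < α < 2 (α ≠ 1), and S_α(p) ≤ JS_α(p) when α > 2. -/

import Mathlib

/-!
With `ρ(x) = (x - x ^ α) / (α - 1)` we have `S_α(p) = ∑ ρ(p i)` and `JS_α(p) = ∑ ρ(1 - p i)`, so
`S_α(p) - JS_α(p) = ∑ ψ(p i)` for `ψ(x) = ρ(x) - ρ(1 - x)`. As `ρ''(x) = -α x ^ (α - 2)`, we get
`ψ''(x) = α ((1 - x) ^ (α - 2) - x ^ (α - 2))`: `ψ` is concave on `[0, 1/2]` for `α < 2` and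
convex there for `α > 2`. Moreover `ψ(0) = 0` and `ψ(1 - x) = -ψ(x)`. For concave `ψ` every term
with `p i ≤ 1/2` is nonnegative, and if some `p j > 1/2`, concavity with `ψ(0) = 0` makes `ψ`
subadditive on `[0, 1/2]`, so the other terms add up to at least `ψ(1 - p j) = -ψ(p j)`.
-/

open Set Finset

section ConcaveOn

variable {f : ℝ → ℝ} {b : ℝ}

lemma ConcaveOn.mul_map_le_of_map_zero (hf : ConcaveOn ℝ (Icc 0 b) f) (hf0 : f 0 = 0)
    {x t : ℝ} (hx : 0 ≤ x) (hxt : x ≤ t) (htb : t ≤ b) : x * f t ≤ t * f x := by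
  rcases (hx.trans hxt).eq_or_lt with rfl | ht
  · rw [le_antisymm hxt hx, hf0]
  have hcomb := hf.2 (x := 0) (y := t) ⟨le_rfl, ht.le.trans htb⟩ ⟨ht.le, htb⟩
    (sub_nonneg.2 ((div_le_one ht).2 hxt)) (div_nonneg hx ht.le) (sub_add_cancel 1 (x / t))
  have hpt : (1 - x / t) • (0 : ℝ) + (x / t) • t = x := by
    simp [div_mul_cancel₀ x ht.ne']
  rw [hpt, hf0, smul_zero, zero_add, smul_eq_mul, div_mul_eq_mul_div,
    div_le_iff₀ ht] at hcomb
  linarith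

lemma ConcaveOn.map_sum_le_sum_map_of_map_zero {ι : Type*} (hf : ConcaveOn ℝ (Icc 0 b) f)
    (hf0 : f 0 = 0) {s : Finset ι} {x : ι → ℝ} (hx : ∀ i ∈ s, 0 ≤ x i)
    (hb : ∑ i ∈ s, x i ≤ b) : f (∑ i ∈ s, x i) ≤ ∑ i ∈ s, f (x i) := by
  rcases (sum_nonneg hx).eq_or_lt with ht | ht
  · have hzero := (sum_eq_zero_iff_of_nonneg hx).1 ht.symm
    rw [← ht, hf0, sum_eq_zero fun i hi ↦ by rw [hzero i hi, hf0]]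
  set t := ∑ i ∈ s, x i
  refine le_of_mul_le_mul_left ?_ ht
  calc t * f t = ∑ i ∈ s, x i * f t := by rw [← sum_mul]
    _ ≤ ∑ i ∈ s, t * f (x i) := sum_le_sum fun i hi ↦
        hf.mul_map_le_of_map_zero hf0 (hx i hi) (single_le_sum hx hi) hb
    _ = t * ∑ i ∈ s, f (x i) := (mul_sum ..).symm

lemma ConcaveOn.sum_map_nonneg_of_map_one_sub {ι : Type*}
    (hf : ConcaveOn ℝ (Icc 0 (1 / 2)) f) (hf0 : f 0 = 0) (hf1 : ∀ x, f (1 - x) = -f x)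
    {s : Finset ι} {p : ι → ℝ} (hp : ∀ i ∈ s, 0 ≤ p i) (hsum : ∑ i ∈ s, p i = 1) :
    0 ≤ ∑ i ∈ s, f (p i) := by
  classical
  by_cases hsmall : ∀ i ∈ s, p i ≤ 1 / 2
  · have hhalf : f (1 / 2) = 0 := by
      linarith [hf1 (1 / 2), show (1 : ℝ) - 1 / 2 = 1 / 2 by norm_num]
    refine sum_nonneg fun i hi ↦ ?_
    have := hf.min_le_of_mem_Icc (x := 0) (y := 1 / 2) (by norm_num) (by norm_num)
      ⟨hp i hi, hsmall i hi⟩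
    rwa [hf0, hhalf, min_self] at this
  push Not at hsmall
  obtain ⟨j, hj, hpj⟩ := hsmall
  have hrest : ∑ i ∈ s.erase j, p i = 1 - p j := by
    rw [← hsum, ← add_sum_erase s p hj]; ring
  have hsub := hf.map_sum_le_sum_map_of_map_zero hf0 (s := s.erase j)
    (fun i hi ↦ hp i (mem_of_mem_erase hi)) (by linarith)
  rw [hrest, hf1] at hsub
  rw [← add_sum_erase s _ hj]
  linarith

end ConcaveOn

section Tsallis

variable {ι : Type*} [Fintype ι] {α x : ℝ}

noncomputable def tsallisEntropy (α : ℝ) (p : ι → ℝ) : ℝ :=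
  (1 - ∑ i, p i ^ α) / (α - 1)

noncomputable def tsallisExtropy (α : ℝ) (p : ι → ℝ) : ℝ :=
  (Fintype.card ι - 1 - ∑ i, (1 - p i) ^ α) / (α - 1)

noncomputable def tsallisTerm (α x : ℝ) : ℝ := (x - x ^ α) / (α - 1)

noncomputable def tsallisTermDeriv (α x : ℝ) : ℝ := (1 - α * x ^ (α - 1)) / (α - 1)

noncomputable def tsallisGap (α x : ℝ) : ℝ := tsallisTerm α x - tsallisTerm α (1 - x)

noncomputable def tsallisGapDeriv (α x : ℝ) : ℝ :=
  tsallisTermDeriv α x + tsallisTermDeriv α (1 - x)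

lemma tsallisEntropy_eq_sum {p : ι → ℝ} (hsum : ∑ i, p i = 1) :
    tsallisEntropy α p = ∑ i, tsallisTerm α (p i) := by
  simp only [tsallisEntropy, tsallisTerm, ← sum_div, sum_sub_distrib, hsum]

lemma tsallisExtropy_eq_sum {p : ι → ℝ} (hsum : ∑ i, p i = 1) :
    tsallisExtropy α p = ∑ i, tsallisTerm α (1 - p i) := by
  simp only [tsallisExtropy, tsallisTerm, ← sum_div, sum_sub_distrib, hsum, sum_const,
    card_univ, nsmul_eq_mul, mul_one]

lemma tsallisEntropy_sub_tsallisExtropy {p : ι → ℝ} (hsum : ∑ i, p i = 1) :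
    tsallisEntropy α p - tsallisExtropy α p = ∑ i, tsallisGap α (p i) := by
  rw [tsallisEntropy_eq_sum hsum, tsallisExtropy_eq_sum hsum, ← sum_sub_distrib]
  rfl

lemma tsallisGap_zero (hα : α ≠ 0) : tsallisGap α 0 = 0 := by
  simp [tsallisGap, tsallisTerm, Real.zero_rpow hα]

lemma tsallisGap_one_sub (α x : ℝ) : tsallisGap α (1 - x) = -tsallisGap α x := by
  simp [tsallisGap]

lemma continuous_tsallisGap (hα : 0 ≤ α) : Continuous (tsallisGap α) := by
  have : Continuous (tsallisTerm α) := by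
    unfold tsallisTerm; fun_prop (disch := assumption)
  unfold tsallisGap; fun_prop

lemma hasDerivAt_tsallisTerm (hx : x ≠ 0) :
    HasDerivAt (tsallisTerm α) (tsallisTermDeriv α x) x :=
  (((hasDerivAt_id x).sub (Real.hasDerivAt_rpow_const (Or.inl hx))).div_const
    (α - 1)).congr_deriv (by simp [tsallisTermDeriv])

lemma hasDerivAt_tsallisTermDeriv (hα : α ≠ 1) (hx : x ≠ 0) :
    HasDerivAt (tsallisTermDeriv α) (-α * x ^ (α - 2)) x :=
  ((((Real.hasDerivAt_rpow_const (Or.inl hx)).const_mul α).const_sub 1).div_const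
    (α - 1)).congr_deriv (by field_simp [sub_ne_zero.2 hα]; ring_nf)

lemma hasDerivAt_tsallisGap (hx0 : x ≠ 0) (hx1 : x ≠ 1) :
    HasDerivAt (tsallisGap α) (tsallisGapDeriv α x) x :=
  ((hasDerivAt_tsallisTerm hx0).sub ((hasDerivAt_tsallisTerm (sub_ne_zero.2 hx1.symm)).comp x
    ((hasDerivAt_id x).const_sub 1))).congr_deriv (by simp [tsallisGapDeriv])

lemma hasDerivAt_tsallisGapDeriv (hα : α ≠ 1) (hx0 : x ≠ 0) (hx1 : x ≠ 1) :
    HasDerivAt (tsallisGapDeriv α) (α * ((1 - x) ^ (α - 2) - x ^ (α - 2))) x :=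
  ((hasDerivAt_tsallisTermDeriv hα hx0).add ((hasDerivAt_tsallisTermDeriv hα
    (sub_ne_zero.2 hx1.symm)).comp x ((hasDerivAt_id x).const_sub 1))).congr_deriv
    (by simp; ring)

lemma concaveOn_tsallisGap (hα : 0 < α) (hα1 : α ≠ 1) (hα2 : α < 2) :
    ConcaveOn ℝ (Icc 0 (1 / 2)) (tsallisGap α) := by
  refine concaveOn_of_hasDerivWithinAt2_nonpos (f' := tsallisGapDeriv α)
    (f'' := fun x ↦ α * ((1 - x) ^ (α - 2) - x ^ (α - 2))) (convex_Icc _ _)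
    (continuous_tsallisGap hα.le).continuousOn (fun x hx ↦ ?_) (fun x hx ↦ ?_)
    (fun x hx ↦ ?_)
  all_goals
    rw [interior_Icc] at hx
    obtain ⟨hx0, hx1⟩ := hx
  · exact (hasDerivAt_tsallisGap hx0.ne' (by linarith)).hasDerivWithinAt
  · exact (hasDerivAt_tsallisGapDeriv hα1 hx0.ne' (by linarith)).hasDerivWithinAt
  · exact mul_nonpos_of_nonneg_of_nonpos hα.le <| sub_nonpos.2 <|
      Real.rpow_le_rpow_of_nonpos hx0 (by linarith) (by linarith)

lemma convexOn_tsallisGap (hα2 : 2 < α) : ConvexOn ℝ (Icc 0 (1 / 2)) (tsallisGap α) := by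
  refine convexOn_of_hasDerivWithinAt2_nonneg (f' := tsallisGapDeriv α)
    (f'' := fun x ↦ α * ((1 - x) ^ (α - 2) - x ^ (α - 2))) (convex_Icc _ _)
    (continuous_tsallisGap (by linarith)).continuousOn (fun x hx ↦ ?_) (fun x hx ↦ ?_)
    (fun x hx ↦ ?_)
  all_goals
    rw [interior_Icc] at hx
    obtain ⟨hx0, hx1⟩ := hx
  · exact (hasDerivAt_tsallisGap hx0.ne' (by linarith)).hasDerivWithinAt
  · exact (hasDerivAt_tsallisGapDeriv (by linarith) hx0.ne' (by linarith)).hasDerivWithinAt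
  · exact mul_nonneg (by linarith) <| sub_nonneg.2 <|
      Real.rpow_le_rpow hx0.le (by linarith) (by linarith)

lemma tsallisExtropy_le_tsallisEntropy (hα : 0 < α) (hα1 : α ≠ 1) (hα2 : α < 2)
    {p : ι → ℝ} (hp : ∀ i, 0 ≤ p i) (hsum : ∑ i, p i = 1) :
    tsallisExtropy α p ≤ tsallisEntropy α p := by
  rw [← sub_nonneg, tsallisEntropy_sub_tsallisExtropy hsum]
  exact (concaveOn_tsallisGap hα hα1 hα2).sum_map_nonneg_of_map_one_sub
    (tsallisGap_zero hα.ne') (tsallisGap_one_sub α) (fun i _ ↦ hp i) hsum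

lemma tsallisEntropy_le_tsallisExtropy (hα2 : 2 < α) {p : ι → ℝ} (hp : ∀ i, 0 ≤ p i)
    (hsum : ∑ i, p i = 1) : tsallisEntropy α p ≤ tsallisExtropy α p := by
  rw [← sub_nonpos, tsallisEntropy_sub_tsallisExtropy hsum, ← neg_nonneg, ← sum_neg_distrib]
  exact (convexOn_tsallisGap hα2).neg.sum_map_nonneg_of_map_one_sub
    (by simp [tsallisGap_zero (show α ≠ 0 by linarith)]) (by simp [tsallisGap_one_sub])
    (fun i _ ↦ hp i) hsum

end Tsallis

theorem tsallis_entropy_vs_extropy_general (N : ℕ) (p : Fin N → ℝ)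
    (hp : ∀ i, 0 ≤ p i) (hsum : ∑ i, p i = 1)
    (α : ℝ) (hα : 0 < α) (hα1 : α ≠ 1) :
    (α < 2 → ((N : ℝ) - 1 - ∑ i, (1 - p i) ^ α) / (α - 1) ≤
        (1 - ∑ i, (p i) ^ α) / (α - 1)) ∧
    (2 < α → (1 - ∑ i, (p i) ^ α) / (α - 1) ≤
        ((N : ℝ) - 1 - ∑ i, (1 - p i) ^ α) / (α - 1)) := by
  have hJS : tsallisExtropy α p = ((N : ℝ) - 1 - ∑ i, (1 - p i) ^ α) / (α - 1) := by
    simp [tsallisExtropy]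
  rw [← hJS]
  exact ⟨fun hα2 ↦ tsallisExtropy_le_tsallisEntropy hα hα1 hα2 hp hsum,
    fun hα2 ↦ tsallisEntropy_le_tsallisExtropy hα2 hp hsum⟩

theorem tsallis_entropy_vs_extropy (N : ℕ) (hN : 3 ≤ N) (p : Fin N → ℝ)
    (hp : ∀ i, 0 ≤ p i) (hsum : ∑ i, p i = 1)
    (α : ℝ) (hα : 0 < α) (hα1 : α ≠ 1) :
    (α < 2 → ((N : ℝ) - 1 - ∑ i, (1 - p i) ^ α) / (α - 1) ≤
        (1 - ∑ i, (p i) ^ α) / (α - 1)) ∧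
    (2 < α → (1 - ∑ i, (p i) ^ α) / (α - 1) ≤
        ((N : ℝ) - 1 - ∑ i, (1 - p i) ^ α) / (α - 1)) :=
  tsallis_entropy_vs_extropy_general N p hp hsum α hα hα1
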